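/- arXiv:2005.06254 — 5 statements merged into one kernel-verified Lean document; each statement's English description precedes it below -/
import Mathlib

section
/- Let x be an infinite word over an alphabet A, let N ≥ 2 and i ≥ 1, and let w₁ and w₂ be closed factors of x of length N with frontiers u₁ and u₂ respectively. If there is a path of length i from w₁ to w₂ in the Rauzy graph of order N of x (equivalently, there exists a finite word z of length N + i such that w₁ is a prefix of z, w₂ is a suffix of z, and every factor of z of length N + 1 is a factor of x), then | |u₁| − |u₂| | < i. In particular, if i = 1 then |u₁| = |u₂|. -/
/-- `w` occurs in the infinite word `x` at position `m`. -/
def OccursAt {A : Type*} (x : ℕ → A) (w : List A) (m : ℕ) : Prop :=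
  w = (List.range w.length).map fun i => x (m + i)

/-- `w` is a factor of the infinite word `x`. -/
def IsFactorOf {A : Type*} (x : ℕ → A) (w : List A) : Prop :=
  ∃ m, OccursAt x w m

/-- `w` is a recurrent factor of `x` : it occurs at infinitely many positions. -/
def IsRecurrentFactor {A : Type*} (x : ℕ → A) (w : List A) : Prop :=
  ∀ N, ∃ m, N ≤ m ∧ OccursAt x w m

/-- The set of positions at which `u` occurs inside the finite word `w`. -/
def occSet {A : Type*} (u w : List A) : Set ℕ := {i | u <+: w.drop i}

/-- `u` is a border of `w`: nonempty, strictly shorter than `w`,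
and both a prefix and a suffix of `w`. -/
def IsBorder {A : Type*} (u w : List A) : Prop :=
  0 < u.length ∧ u.length < w.length ∧ u <+: w ∧ u <:+ w

/-- A finite word is closed if it is a single letter or it has a border
occurring exactly twice in it. -/
def IsClosedWord {A : Type*} (w : List A) : Prop :=
  w.length = 1 ∨ ∃ u, IsBorder u w ∧ (occSet u w).ncard = 2

/-- A nonempty finite word is open if it is not closed. -/
def IsOpenWord {A : Type*} (w : List A) : Prop :=
  w ≠ [] ∧ ¬ IsClosedWord w

/-- The frontier of a closed word is its longest border. -/
def IsFrontier {A : Type*} (u w : List A) : Prop :=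
  IsBorder u w ∧ ∀ v, IsBorder v w → v.length ≤ u.length

/-- number of closed factors of `x` of length `n`. -/
noncomputable def clComp {A : Type*} (x : ℕ → A) (n : ℕ) : ℕ :=
  {w : List A | w.length = n ∧ IsFactorOf x w ∧ IsClosedWord w}.ncard

/-- number of open factors of `x` of length `n`. -/
noncomputable def opComp {A : Type*} (x : ℕ → A) (n : ℕ) : ℕ :=
  {w : List A | w.length = n ∧ IsFactorOf x w ∧ IsOpenWord w}.ncard

/-- `x` is ultimately periodic: `x = u v v v ⋯` for some `u`, `v` with `v` nonempty,
expressed via: every finite word `u v^n` is a prefix of `x`. -/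
def UltPeriodic {A : Type*} (x : ℕ → A) : Prop :=
  ∃ u v : List A, v ≠ [] ∧ ∀ n : ℕ, OccursAt x (u ++ (List.replicate n v).flatten) 0

/-- `S ⊆ ℕ` is syndetic with gaps smaller than `d`: `S ∩ [n, n+d] ≠ ∅` for all `n`. -/
def SyndeticWithGaps (S : Set ℕ) (d : ℕ) : Prop :=
  ∀ n : ℕ, ∃ m ∈ S, n ≤ m ∧ m ≤ n + d

/-- `S ⊆ ℕ` is syndetic. -/
def Syndetic (S : Set ℕ) : Prop :=
  ∃ d : ℕ, SyndeticWithGaps S d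

lemma getD_of_prefix {A : Type*} (a : A) {u w : List A} (h : u <+: w) {j : ℕ}
    (hj : j < u.length) : u.getD j a = w.getD j a := by
  obtain ⟨t, rfl⟩ := h
  rw [List.getD_eq_getElem _ _ hj, List.getD_eq_getElem _ _ (by simp; omega),
    List.getElem_append_left hj]

lemma getD_of_suffix {A : Type*} (a : A) {u w : List A} (h : u <:+ w) {j m : ℕ}
    (hj : j < u.length) (hm : m = w.length - u.length + j) :
    u.getD j a = w.getD m a := by
  obtain ⟨t, rfl⟩ := h
  subst hm
  have he : (t ++ u).length - u.length + j = t.length + j := by simp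
  rw [he, List.getD_eq_getElem _ _ hj, List.getD_eq_getElem _ _ (by simp; omega),
    List.getElem_append_right (by omega)]
  congr 1; omega

lemma prefix_drop_of_getD {A : Type*} (a : A) {u w : List A} (k : ℕ)
    (hlen : k + u.length ≤ w.length)
    (h : ∀ j < u.length, u.getD j a = w.getD (k + j) a) : u <+: w.drop k := by
  have he : u = (w.drop k).take u.length := by
    apply List.ext_getElem
    · simp; omega
    · intro j hj hj'
      have hh := h j hj
      rw [List.getD_eq_getElem _ _ hj, List.getD_eq_getElem _ _ (by omega)] at hh
      simpa using hh
  rw [he]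
  exact List.take_prefix _ _

lemma occSet_finite' {A : Type*} {u w : List A} (hu : 0 < u.length) :
    (occSet u w).Finite := by
  apply (Set.finite_Iio w.length).subset
  intro j hj
  have h1 := List.IsPrefix.length_le hj
  simp only [List.length_drop] at h1
  simp only [Set.mem_Iio]
  omega

lemma ncard_ne_two' {s : Set ℕ} {p q r : ℕ} (hfin : s.Finite)
    (hp : p ∈ s) (hq : q ∈ s) (hr : r ∈ s) (h1 : p ≠ q) (h2 : p ≠ r) (h3 : q ≠ r) :
    s.ncard ≠ 2 := by
  intro h
  have hsub : ({p, q, r} : Set ℕ) ⊆ s := by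
    intro t ht
    simp only [Set.mem_insert_iff, Set.mem_singleton_iff] at ht
    rcases ht with rfl | rfl | rfl <;> assumption
  have h3' : ({p, q, r} : Set ℕ).ncard = 3 := by
    rw [Set.ncard_insert_of_notMem (by simp [h1, h2]),
      Set.ncard_insert_of_notMem (by simp [h3]), Set.ncard_singleton]
  have := Set.ncard_le_ncard hsub hfin
  omega

/-- For a closed word of length ≥ 2, the frontier occurs exactly twice. -/
lemma frontier_occ_two' {A : Type*} {u w : List A} (hw2 : 2 ≤ w.length)
    (hc : IsClosedWord w) (hf : IsFrontier u w) : (occSet u w).ncard = 2 := by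
  rcases hc with h1 | ⟨v, hvb, hv2⟩
  · omega
  obtain ⟨hv0, hvlt, hvp, hvs⟩ := hvb
  obtain ⟨⟨hu0, hult, hup, hus⟩, hmax⟩ := hf
  have hle : v.length ≤ u.length := hmax v ⟨hv0, hvlt, hvp, hvs⟩
  have hvu : v = u := by
    by_cases heq : v.length = u.length
    · have e1 : v = w.take v.length := by
        obtain ⟨t, ht⟩ := hvp; rw [← ht]; simp
      have e2 : u = w.take u.length := by
        obtain ⟨t, ht⟩ := hup; rw [← ht]; simp
      rw [e1, e2, heq]
    · exfalso
      have hlt : v.length < u.length := lt_of_le_of_ne hle heq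
      have hne : v ≠ [] := by intro h; subst h; simp at hv0
      obtain ⟨a, _, _⟩ := List.exists_cons_of_ne_nil hne
      -- three occurrences of v in w: 0, u.length - v.length, w.length - v.length
      have h0 : 0 ∈ occSet v w := by simpa [occSet] using hvp
      have hN : (w.length - v.length) ∈ occSet v w := by
        apply prefix_drop_of_getD a (hlen := by omega)
        intro j hj
        exact getD_of_suffix a hvs hj (by omega)
      have hm : (u.length - v.length) ∈ occSet v w := by
        apply prefix_drop_of_getD a (hlen := by omega)
        intro j hj
        have e3 : v.getD j a = w.getD (w.length - v.length + j) a :=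
          getD_of_suffix a hvs hj rfl
        have e4 : u.getD (u.length - v.length + j) a = w.getD (u.length - v.length + j) a :=
          getD_of_prefix a hup (by omega)
        have e5 : u.getD (u.length - v.length + j) a = w.getD (w.length - v.length + j) a :=
          getD_of_suffix a hus (by omega) (by omega)
        rw [e3, ← e5, e4]
      exact absurd hv2 (ncard_ne_two' (occSet_finite' hv0) h0 hm hN
        (by omega) (by omega) (by omega))
  subst hvu
  exact hv2

/-- If `w₁`, `w₂` are closed factors of `x` of length `N` with frontiers
`u₁`, `u₂`, and there is a path of length `i` from `w₁` to `w₂` in the Rauzy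
graph of order `N` of `x`, then `||u₁| − |u₂|| < i`. -/
theorem frontier_length_diff_lt_path_length
    {A : Type*} (x : ℕ → A) (N i : ℕ) (hN : 2 ≤ N) (hi : 1 ≤ i)
    (w₁ w₂ u₁ u₂ : List A)
    (hw₁ : IsFactorOf x w₁) (hw₂ : IsFactorOf x w₂)
    (hl₁ : w₁.length = N) (hl₂ : w₂.length = N)
    (hc₁ : IsClosedWord w₁) (hc₂ : IsClosedWord w₂)
    (hf₁ : IsFrontier u₁ w₁) (hf₂ : IsFrontier u₂ w₂)
    (z : List A) (hz : z.length = N + i)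
    (hpre : w₁ <+: z) (hsuf : w₂ <:+ z)
    (hedges : ∀ u : List A, u <:+: z → u.length = N + 1 → IsFactorOf x u) :
    |(u₁.length : ℤ) - (u₂.length : ℤ)| < (i : ℤ) := by
  by_contra hcon
  push_neg at hcon
  have hocc₁ : (occSet u₁ w₁).ncard = 2 := frontier_occ_two' (by omega) hc₁ hf₁
  have hocc₂ : (occSet u₂ w₂).ncard = 2 := frontier_occ_two' (by omega) hc₂ hf₂
  obtain ⟨⟨h10, h1lt, h1p, h1s⟩, _⟩ := hf₁
  obtain ⟨⟨h20, h2lt, h2p, h2s⟩, _⟩ := hf₂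
  set a₁ := u₁.length with ha₁
  set a₂ := u₂.length with ha₂
  have hne : u₁ ≠ [] := List.ne_nil_of_length_pos h10
  obtain ⟨a, _, _⟩ := List.exists_cons_of_ne_nil hne
  rw [hl₁] at h1lt
  rw [hl₂] at h2lt
  have hsplit : a₁ + i ≤ a₂ ∨ a₂ + i ≤ a₁ := by
    rcases le_abs.mp hcon with h | h
    · right; omega
    · left; omega
  rcases hsplit with hcase | hcase
  · -- third occurrence of u₁ in w₁ at position a₂ - a₁
    have h0 : 0 ∈ occSet u₁ w₁ := by
      show u₁ <+: w₁.drop 0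
      simpa using h1p
    have hNo : (N - a₁) ∈ occSet u₁ w₁ := by
      apply prefix_drop_of_getD a (hlen := by omega)
      intro j hj
      exact getD_of_suffix a h1s hj (by omega)
    have hmid : (a₂ - a₁) ∈ occSet u₁ w₁ := by
      apply prefix_drop_of_getD a (hlen := by omega)
      intro j hj
      set k := a₂ - a₁ - i + j with hk
      have e1 : u₂.getD k a = w₂.getD k a := getD_of_prefix a h2p (by omega)
      have e2 : w₂.getD k a = z.getD (a₂ - a₁ + j) a :=
        getD_of_suffix a hsuf (by omega) (by omega)
      have e3 : u₂.getD k a = w₂.getD (N - a₂ + k) a :=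
        getD_of_suffix a h2s (by omega) (by omega)
      have e4 : w₂.getD (N - a₂ + k) a = z.getD (N - a₁ + j) a :=
        getD_of_suffix a hsuf (by omega) (by omega)
      have e5 : u₁.getD j a = w₁.getD (N - a₁ + j) a :=
        getD_of_suffix a h1s hj (by omega)
      have e6 : w₁.getD (N - a₁ + j) a = z.getD (N - a₁ + j) a :=
        getD_of_prefix a hpre (by omega)
      have e7 : w₁.getD (a₂ - a₁ + j) a = z.getD (a₂ - a₁ + j) a :=
        getD_of_prefix a hpre (by omega)
      rw [e5, e6, ← e4, ← e3, e1, e2, ← e7]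
    exact absurd hocc₁ (ncard_ne_two' (occSet_finite' h10) h0 hmid hNo
      (by omega) (by omega) (by omega))
  · -- third occurrence of u₂ in w₂ at position N - a₁
    have h0 : 0 ∈ occSet u₂ w₂ := by
      show u₂ <+: w₂.drop 0
      simpa using h2p
    have hNo : (N - a₂) ∈ occSet u₂ w₂ := by
      apply prefix_drop_of_getD a (hlen := by omega)
      intro j hj
      exact getD_of_suffix a h2s hj (by omega)
    have hmid : (N - a₁) ∈ occSet u₂ w₂ := by
      apply prefix_drop_of_getD a (hlen := by omega)
      intro j hj
      have e1 : u₂.getD j a = w₂.getD j a := getD_of_prefix a h2p hj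
      have e2 : w₂.getD j a = z.getD (i + j) a :=
        getD_of_suffix a hsuf (by omega) (by omega)
      have e3 : u₁.getD (i + j) a = w₁.getD (i + j) a :=
        getD_of_prefix a h1p (by omega)
      have e4 : w₁.getD (i + j) a = z.getD (i + j) a :=
        getD_of_prefix a hpre (by omega)
      have e5 : u₁.getD (i + j) a = w₁.getD (N - a₁ + i + j) a :=
        getD_of_suffix a h1s (by omega) (by omega)
      have e6 : w₁.getD (N - a₁ + i + j) a = z.getD (N - a₁ + i + j) a :=
        getD_of_prefix a hpre (by omega)
      have e7 : w₂.getD (N - a₁ + j) a = z.getD (N - a₁ + i + j) a :=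
        getD_of_suffix a hsuf (by omega) (by omega)
      rw [e1, e2, ← e4, ← e3, e5, e6, ← e7]
    exact absurd hocc₂ (ncard_ne_two' (occSet_finite' h20) h0 hmid hNo
      (by omega) (by omega) (by omega))
end

section
/- Let w be a nonempty finite word over an alphabet A. Then there is at most one letter b ∈ A such that the word bw (w preceded by the letter b) is closed; that is, if b, c ∈ A are letters with b ≠ c, then bw and cw cannot both be closed. -/

private lemma closed_ext_key {A : Type*} (w : List A) (b c : A) (hbc : b ≠ c)
    (u v : List A) (hu : IsBorder u (b :: w)) (hv : IsBorder v (c :: w))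
    (hocc : (occSet u (b :: w)).ncard = 2) (hlen : u.length ≤ v.length) : False := by
  obtain ⟨hu0, hu1, hupre, husuf⟩ := hu
  obtain ⟨hv0, hv1, hvpre, hvsuf⟩ := hv
  simp only [List.length_cons] at hu1 hv1
  have huw : u <:+ w := by
    rcases List.suffix_cons_iff.mp husuf with h | h
    · exfalso; have := congrArg List.length h; simp at this; omega
    · exact h
  have hvw : v <:+ w := by
    rcases List.suffix_cons_iff.mp hvsuf with h | h
    · exfalso; have := congrArg List.length h; simp at this; omega
    · exact h
  have hlt : u.length < v.length := by
    rcases lt_or_eq_of_le hlen with h | h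
    · exact h
    · exfalso
      have heq : u = v := (List.suffix_of_suffix_length_le huw hvw (le_of_eq h)).eq_of_length h
      rcases u with _ | ⟨a, u'⟩
      · simp at hu0
      · rw [List.cons_prefix_cons] at hupre
        rw [← heq, List.cons_prefix_cons] at hvpre
        exact hbc (hupre.1.symm.trans hvpre.1)
  obtain ⟨c0, p, rfl⟩ : ∃ c0 p, v = c0 :: p := by
    rcases v with _ | ⟨c0, p⟩
    · simp at hv0
    · exact ⟨c0, p, rfl⟩
  rw [List.cons_prefix_cons] at hvpre
  obtain ⟨rfl, hpw⟩ := hvpre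
  simp only [List.length_cons] at hlt hv1 hlen
  have hup : u <:+ p := by
    have hpw2 : p <:+ w := (List.suffix_cons _ _).trans hvw
    exact List.suffix_of_suffix_length_le huw hpw2 (by omega)
  obtain ⟨s, rfl⟩ := hup
  obtain ⟨t, hwt⟩ := hpw
  obtain ⟨r, hr⟩ := husuf
  have e1 : r.length + u.length = w.length + 1 := by
    have := congrArg List.length hr; simp at this; omega
  have e2 : s.length + u.length + t.length = w.length := by
    have := congrArg List.length hwt; simp at this; omega
  have e3 : s.length + u.length < w.length := by
    simp only [List.length_append] at hv1; omega
  have h0 : 0 ∈ occSet u (b :: w) := by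
    simpa [occSet] using hupre
  have h1 : s.length + 1 ∈ occSet u (b :: w) := by
    simp only [occSet, Set.mem_setOf_eq, List.drop_succ_cons]
    rw [← hwt, List.append_assoc, List.drop_left' rfl]
    exact ⟨t, rfl⟩
  have h2 : r.length ∈ occSet u (b :: w) := by
    simp only [occSet, Set.mem_setOf_eq]
    rw [← hr, List.drop_left' rfl]
  have hfin : (occSet u (b :: w)).Finite := by
    apply Set.Finite.subset (Set.finite_Iio (w.length + 2))
    intro i hi
    simp only [occSet, Set.mem_setOf_eq] at hi
    have := hi.length_le
    simp only [List.length_drop, List.length_cons] at this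
    simp only [Set.mem_Iio]
    omega
  have hsub : ({0, s.length + 1, r.length} : Set ℕ) ⊆ occSet u (b :: w) := by
    intro i hi
    rcases hi with rfl | rfl | rfl
    exacts [h0, h1, h2]
  have h3 : ({0, s.length + 1, r.length} : Set ℕ).ncard = 3 :=
    Set.ncard_eq_three.mpr ⟨0, s.length + 1, r.length, by omega, by omega, by omega, rfl⟩
  have := Set.ncard_le_ncard hsub hfin
  omega

/-- Given a nonempty finite word `w`, at most one left extension `b :: w`
of `w` by a letter is closed. -/
theorem at_most_one_closed_left_extension
    {A : Type*} (w : List A) (hw : w ≠ []) (b c : A) (hbc : b ≠ c) :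
    ¬ (IsClosedWord (b :: w) ∧ IsClosedWord (c :: w)) := by
  rintro ⟨h1, h2⟩
  have hwl : 0 < w.length := List.length_pos_iff.mpr hw
  rcases h1 with h1 | ⟨u, hu, huocc⟩
  · exact hw (by simpa using h1)
  rcases h2 with h2 | ⟨v, hv, hvocc⟩
  · exact hw (by simpa using h2)
  rcases le_total u.length v.length with h | h
  · exact closed_ext_key w b c hbc u v hu hv huocc h
  · exact closed_ext_key w c b hbc.symm v u hv hu hvocc h
end

section
/- Let x be an aperiodic infinite word over a finite alphabet A, let k be a positive integer, and let N > 11k + 2 be such that op_x(N) = k. Then for every nonempty finite word u with |u| < 2k, the word u^N (u concatenated with itself N times) is not a factor of x. -/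
/-- the window of `x` of length `N` starting at `a`. -/
def window {A : Type*} (x : ℕ → A) (a N : ℕ) : List A :=
  (List.range N).map fun i => x (a + i)

lemma window_length {A : Type*} (x : ℕ → A) (a N : ℕ) : (window x a N).length = N := by
  simp [window]

lemma window_getElem {A : Type*} (x : ℕ → A) (a N i : ℕ) (h : i < (window x a N).length) :
    (window x a N)[i] = x (a + i) := by
  simp [window]

lemma window_occursAt {A : Type*} (x : ℕ → A) (a N : ℕ) : OccursAt x (window x a N) a := by
  simp [OccursAt, window]

lemma window_isFactor {A : Type*} (x : ℕ → A) (a N : ℕ) : IsFactorOf x (window x a N) :=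
  ⟨a, window_occursAt x a N⟩

lemma open_window {A : Type*} (x : ℕ → A) (a N p q : ℕ)
    (hp : 0 < p) (hqN : q < N)
    (hsize : (N - q) + 3 * p ≤ q)
    (hper : ∀ r, r + p < q → x (a + r) = x (a + (r + p)))
    (hbr : x (a + (q - p)) ≠ x (a + q)) :
    IsOpenWord (window x a N) := by
  have hW := window_length x a N
  constructor
  · intro h
    rw [← List.length_eq_zero_iff] at h; omega
  rintro (h1 | ⟨v, ⟨hv0, hvlt, hvpre, hvsuf⟩, hcard⟩)
  · omega
  rw [hW] at hvlt
  set ℓ := v.length with hℓ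
  by_cases hcase : ℓ + q < N + p
  · -- case A : short border, occurs at 0, p, 2p
    have hocc : ∀ s : ℕ, (s = p ∨ s = 2*p) → ℓ + s ≤ q → s ∈ occSet v (window x a N) := by
      intro s hs hsq
      have hval : ∀ r, r < ℓ → x (a + r) = x (a + (s + r)) := by
        intro r hr
        rcases hs with h | h <;> rw [h]
        · rw [hper r (by omega), show r + p = p + r from by omega]
        · rw [hper r (by omega), hper (r + p) (by omega),
            show r + p + p = 2*p + r from by omega]
      have hv : v = ((window x a N).drop s).take ℓ := by
        apply List.ext_getElem
        · simp [hW]; omega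
        · intro n h1 h2
          rw [List.getElem_take, List.getElem_drop, window_getElem]
          rw [hvpre.getElem h1, window_getElem]
          exact hval n h1
      show v <+: (window x a N).drop s
      rw [hv]; exact List.take_prefix _ _
    have h0 : (0 : ℕ) ∈ occSet v (window x a N) := by
      show v <+: (window x a N).drop 0
      simpa using hvpre
    have hfin : (occSet v (window x a N)).Finite := by
      apply (Set.finite_Iic N).subset
      intro i hi
      have := (hi : v <+: _).length_le
      simp [hW] at this
      simp only [Set.mem_Iic]
      omega
    have hsub : ({0, p, 2*p} : Set ℕ) ⊆ occSet v (window x a N) := by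
      intro i hi
      simp only [Set.mem_insert_iff, Set.mem_singleton_iff] at hi
      rcases hi with h | h | h <;> rw [h]
      · exact h0
      · exact hocc p (Or.inl rfl) (by omega)
      · exact hocc (2*p) (Or.inr rfl) (by omega)
    have h3 : ({0, p, 2*p} : Set ℕ).ncard = 3 := by
      rw [Set.ncard_insert_of_notMem (by simp; omega) (Set.toFinite _),
        Set.ncard_pair (by omega)]
    have := Set.ncard_le_ncard hsub hfin
    omega
  · -- case B : long border, break mismatch
    push_neg at hcase
    have hj1 : 1 ≤ N - q := by omega
    set i1 := ℓ + q - N - p with hi1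
    set i2 := ℓ + q - N with hi2
    have hi2ℓ : i2 < ℓ := by omega
    have hi1ℓ : i1 < ℓ := by omega
    have e2 : v[i2]'hi2ℓ = x (a + q) := by
      rw [hvsuf.getElem hi2ℓ, window_getElem, hW]
      congr 1; omega
    have e1 : v[i1]'hi1ℓ = x (a + (q - p)) := by
      rw [hvsuf.getElem hi1ℓ, window_getElem, hW]
      congr 1; omega
    have p2 : v[i2]'hi2ℓ = x (a + i2) := by
      rw [hvpre.getElem hi2ℓ, window_getElem]
    have p1 : v[i1]'hi1ℓ = x (a + i1) := by
      rw [hvpre.getElem hi1ℓ, window_getElem]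
    have hper1 : x (a + i1) = x (a + i2) := by
      have h := hper i1 (by omega)
      rwa [show i1 + p = i2 by omega] at h
    exact hbr (by rw [← e1, p1, hper1, ← p2, e2])


lemma flatten_replicate_length {A : Type*} (u : List A) (n : ℕ) :
    (List.replicate n u).flatten.length = n * u.length := by
  induction n with
  | zero => simp
  | succ n ih => rw [List.replicate_succ, List.flatten_cons, List.length_append, ih]; ring

lemma flatten_replicate_getElem {A : Type*} (u : List A) (n i : ℕ) (h : i < n * u.length)
    (h' : i % u.length < u.length) :
    (List.replicate n u).flatten[i]'(by rw [flatten_replicate_length]; exact h)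
      = u[i % u.length] := by
  induction n generalizing i with
  | zero => omega
  | succ n ih =>
    have hrw : (List.replicate (n+1) u).flatten = u ++ (List.replicate n u).flatten := by
      rw [List.replicate_succ, List.flatten_cons]
    by_cases hi : i < u.length
    · rw [List.getElem_of_eq hrw, List.getElem_append_left hi]
      congr 1
      exact (Nat.mod_eq_of_lt hi).symm
    · push_neg at hi
      have hmul : (n+1) * u.length = n * u.length + u.length := by ring
      have h2 : i - u.length < n * u.length := by omega
      have hrt : i - u.length < (List.replicate n u).flatten.length := by
        rw [flatten_replicate_length]; exact h2
      rw [List.getElem_of_eq hrw,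
        List.getElem_append_right (h₂ := by rw [List.length_append, flatten_replicate_length]; omega) hi]
      rw [ih (i - u.length) h2 (Nat.mod_lt _ (by omega))]
      congr 1
      rw [Nat.mod_eq_sub_mod hi]

lemma ult_of_eventually_periodic {A : Type*} (x : ℕ → A) (m p : ℕ) (hp : 0 < p)
    (h : ∀ i, x (m + i) = x (m + i + p)) :
    ∃ u v : List A, v ≠ [] ∧ ∀ n : ℕ, OccursAt x (u ++ (List.replicate n v).flatten) 0 := by
  set v0 := window x m p with hv0
  have hv0len : v0.length = p := window_length x m p
  refine ⟨(List.range m).map x, v0, List.ne_nil_of_length_pos (by omega), ?_⟩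
  have hflat : ∀ n, (List.replicate n v0).flatten = (List.range (n * p)).map fun i => x (m + i) := by
    intro n
    induction n with
    | zero => simp
    | succ n ih =>
      rw [List.replicate_succ, List.flatten_cons, ih,
        show (n+1)*p = p + n*p from by ring, List.range_add, List.map_append, List.map_map]
      congr 1
      apply List.ext_getElem (by simp)
      intro r h1 h2
      simp only [List.getElem_map, List.getElem_range, Function.comp_apply]
      rw [h r]
      congr 1
      ring
  intro n
  show _ = _
  rw [hflat n]
  apply List.ext_getElem
  · simp
  · intro r h1 h2
    simp only [List.getElem_map, List.getElem_range]
    rcases Nat.lt_or_ge r m with hr | hr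
    · rw [List.getElem_append_left (by simpa using hr)]
      simp
    · rw [List.getElem_append_right (by simpa using hr)]
      simp only [List.getElem_map, List.getElem_range, List.length_map, List.length_range]
      congr 1
      omega

/-- If `x` is aperiodic, `N > 11k + 2` and `op_x(N) = k`, then `u^N` is not a
factor of `x` for any nonempty word `u` with `|u| < 2k`. -/
theorem no_high_power_factor_of_open_complexity
    {A : Type*} [Fintype A] (x : ℕ → A) (hx : ¬ UltPeriodic x)
    (k N : ℕ) (hk : 0 < k) (hN : 11 * k + 2 < N) (hop : opComp x N = k)
    (u : List A) (hu : u ≠ []) (hlen : u.length < 2 * k) :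
    ¬ IsFactorOf x (List.replicate N u).flatten := by
  classical
  rintro ⟨m, hm⟩
  set p := u.length with hpdef
  have hp : 0 < p := List.length_pos_iff.mpr hu
  have hflen : (List.replicate N u).flatten.length = N * p := flatten_replicate_length u N
  have hxw : ∀ i, i < N * p → ∀ (hb : i % p < p), x (m + i) = u[i % p]'hb := by
    intro i hi hb
    have hh : i < (List.replicate N u).flatten.length := by rw [hflen]; exact hi
    have := List.getElem_of_eq hm hh
    rw [flatten_replicate_getElem u N i hi hb] at this
    simp only [List.getElem_map, List.getElem_range] at this
    exact this.symm
  have hper0 : ∀ i, i + p < N * p → x (m + i) = x (m + (i + p)) := by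
    intro i hi
    rw [hxw i (by omega) (Nat.mod_lt _ hp), hxw (i + p) (by omega) (Nat.mod_lt _ hp)]
    simp [Nat.add_mod_right]
  by_cases hB : ∀ i, x (m + i) = x (m + i + p)
  · exact hx (ult_of_eventually_periodic x m p hp hB)
  push_neg at hB
  set d := Nat.find hB with hddef
  have hd : x (m + d) ≠ x (m + d + p) := Nat.find_spec hB
  have hmin : ∀ i, i < d → x (m + i) = x (m + i + p) := by
    intro i hi
    exact not_ne_iff.mp (Nat.find_min hB hi)
  have hNp : N ≤ N * p := by
    calc N = N * 1 := (mul_one N).symm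
    _ ≤ N * p := Nat.mul_le_mul_left N hp
  have hdN : N * p ≤ d + p := by
    by_contra hcon
    push_neg at hcon
    exact hd (by
      have := hper0 d (by omega)
      rwa [show m + (d + p) = m + d + p from by ring] at this)
  set e := d + p - N with hedef
  have he : d + p = N + e := by omega
  have hopen : ∀ j, 1 ≤ j → j ≤ k + 1 → IsOpenWord (window x (m + e + j) N) := by
    intro j h1 h2
    apply open_window x (m + e + j) N p (N - j) hp (by omega) (by omega)
    · intro r hr
      have hcond : e + j + r < d := by omega
      have := hmin (e + j + r) hcond
      have e1 : m + e + j + r = m + (e + j + r) := by ring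
      have e2 : m + e + j + (r + p) = m + (e + j + r) + p := by ring
      rw [e1, e2]
      exact this
    · have e1 : m + e + j + (N - j - p) = m + d := by omega
      have e2 : m + e + j + (N - j) = m + d + p := by omega
      rw [e1, e2]
      exact hd
  have hdist : ∀ j j', 1 ≤ j → j < j' → j' ≤ k + 1 →
      window x (m + e + j) N ≠ window x (m + e + j') N := by
    intro j j' h1 h2 h3 heq
    have hval : ∀ r, r < N → x (m + e + j + r) = x (m + e + j' + r) := by
      intro r hr
      have hr1 : r < (window x (m + e + j) N).length := by rw [window_length]; exact hr
      have := List.getElem_of_eq heq hr1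
      rwa [window_getElem, window_getElem] at this
    set r1 := N - j' - p with hr1def
    set r2 := N - j' with hr2def
    have hjp : j' + p < N := by omega
    have g1 : x (m + e + j + r1) = x (m + e + j + (r1 + p)) := by
      have hcond : e + j + r1 < d := by omega
      have := hmin (e + j + r1) hcond
      have e1 : m + e + j + r1 = m + (e + j + r1) := by ring
      have e2 : m + e + j + (r1 + p) = m + (e + j + r1) + p := by ring
      rw [e1, e2]
      exact this
    have g2 : x (m + e + j' + r1) ≠ x (m + e + j' + r2) := by
      have e1 : m + e + j' + r1 = m + d := by omega
      have e2 : m + e + j' + r2 = m + d + p := by omega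
      rw [e1, e2]
      exact hd
    apply g2
    rw [← hval r1 (by omega), g1, show r1 + p = r2 from by omega, hval r2 (by omega)]
  have hS : {w : List A | w.length = N ∧ IsFactorOf x w ∧ IsOpenWord w}.ncard = k := hop
  set S := {w : List A | w.length = N ∧ IsFactorOf x w ∧ IsOpenWord w} with hSdef
  have hSfin : S.Finite := by
    by_contra hcon
    have h0 := Set.Infinite.ncard (hcon : S.Infinite)
    omega
  set F : Fin (k + 1) → List A := fun j => window x (m + e + (j.1 + 1)) N with hFdef
  have hinj : Function.Injective F := by
    intro a b hab
    by_contra hne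
    have hne' : a.1 ≠ b.1 := fun h => hne (Fin.ext h)
    rcases lt_or_gt_of_ne hne' with hlt | hlt
    · exact hdist (a.1 + 1) (b.1 + 1) (by omega) (by omega) (by omega) hab
    · exact hdist (b.1 + 1) (a.1 + 1) (by omega) (by omega) (by omega) hab.symm
  have hmem : ∀ j, F j ∈ S :=
    fun j => ⟨window_length _ _ _, window_isFactor _ _ _, hopen (j.1 + 1) (by omega) (by omega)⟩
  have hcard : (Finset.image F Finset.univ).card = k + 1 := by
    rw [Finset.card_image_of_injective _ hinj, Finset.card_univ, Fintype.card_fin]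
  have hsub : ↑(Finset.image F Finset.univ) ⊆ S := by
    intro w hw
    simp only [Finset.coe_image, Finset.coe_univ, Set.image_univ, Set.mem_range] at hw
    obtain ⟨j, rfl⟩ := hw
    exact hmem j
  have := Set.ncard_le_ncard hsub hSfin
  rw [Set.ncard_coe_finset, hcard] at this
  omega
end

section
/- Let x be an aperiodic infinite word over a finite alphabet A, let k and d be positive integers, and let S ⊆ ℕ be a syndetic set with gaps smaller than d such that cl_x(n) < k for every n ∈ S. Let u be a recurrent factor of x, and let r and s be finite words of lengths k and k + d respectively such that the concatenation r u s is a factor of x. Then there exist a proper (possibly empty) suffix r′ of r and a proper (possibly empty) prefix s′ of s such that the word r′ u s′ is either right special or left special in x. -/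
/-- `w` is right special in `x`: `wa` and `wb` are factors of `x` for two
distinct letters `a ≠ b`. -/
def RightSpecial {A : Type*} (x : ℕ → A) (w : List A) : Prop :=
  ∃ a b : A, a ≠ b ∧ IsFactorOf x (w ++ [a]) ∧ IsFactorOf x (w ++ [b])

/-- `w` is left special in `x`: `aw` and `bw` are factors of `x` for two
distinct letters `a ≠ b`. -/
def LeftSpecial {A : Type*} (x : ℕ → A) (w : List A) : Prop :=
  ∃ a b : A, a ≠ b ∧ IsFactorOf x (a :: w) ∧ IsFactorOf x (b :: w)

/-!
Suppose no such `r' u s'` is special. Extending letter by letter, every occurrence of `u` is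
then followed by `s`, and preceded by `r` when it starts at a position `≥ k`: a different letter
would make some `r' u s'` right or left special. So every occurrence of `u` at a position `≥ k`
lies in an occurrence of `W = r u s`.

If some occurrence of `u` at a position `p ≥ k` has no other occurrence in `(p - k, p)`, let
`p + g` be the next occurrence and take `n ∈ S` with `|u| + k + g ≤ n ≤ |u| + k + g + d`. The `k`
factors of length `n` starting at `p - k + 1, …, p` are pairwise distinct, and each is closed:
its prefix of length `n - g` lies in `W`, so it recurs `g` positions later, and it contains the
occurrence of `u` at `p`, so it occurs nowhere in between. Hence `cl_x(n) ≥ k`.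

Otherwise consecutive occurrences of `u` are less than `k` apart. Two occurrences of `W` at
distance `γ < k` give `W` the period `γ`, and since every position beyond `k` is covered by an
occurrence of `W` together with the next `γ` positions, `x` is ultimately periodic with period `γ`.
-/

section

variable {A : Type*} {x : ℕ → A}

def factorAt (x : ℕ → A) (m n : ℕ) : List A := (List.range n).map fun i => x (m + i)

@[simp] theorem length_factorAt (m n : ℕ) : (factorAt x m n).length = n := by
  simp [factorAt]

@[simp] theorem getElem_factorAt {m n i : ℕ} (h : i < (factorAt x m n).length) :
    (factorAt x m n)[i] = x (m + i) := by
  simp [factorAt]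

theorem factorAt_add (m a b : ℕ) :
    factorAt x m (a + b) = factorAt x m a ++ factorAt x (m + a) b := by
  simp [factorAt, List.range_add, Function.comp_def, add_assoc]

theorem drop_factorAt (m n o : ℕ) : (factorAt x m n).drop o = factorAt x (m + o) (n - o) := by
  refine List.ext_getElem (by simp) fun i h _ => ?_
  simp [add_assoc]

theorem occursAt_iff_eq_factorAt {w : List A} {m : ℕ} :
    OccursAt x w m ↔ w = factorAt x m w.length :=
  Iff.rfl

theorem occursAt_iff_getElem {w : List A} {m : ℕ} :
    OccursAt x w m ↔ ∀ i (h : i < w.length), w[i] = x (m + i) := by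
  rw [occursAt_iff_eq_factorAt, List.ext_getElem_iff]
  simp

theorem occursAt_factorAt (m n : ℕ) : OccursAt x (factorAt x m n) m := by
  simp [occursAt_iff_getElem]

theorem OccursAt.apply_add_eq {w : List A} {m m' i : ℕ} (h : OccursAt x w m)
    (h' : OccursAt x w m') (hi : i < w.length) : x (m + i) = x (m' + i) := by
  rw [← occursAt_iff_getElem.1 h i hi, occursAt_iff_getElem.1 h' i hi]

theorem occursAt_append {v w : List A} {m : ℕ} :
    OccursAt x (v ++ w) m ↔ OccursAt x v m ∧ OccursAt x w (m + v.length) := by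
  rw [occursAt_iff_eq_factorAt, occursAt_iff_eq_factorAt, occursAt_iff_eq_factorAt,
    List.length_append, factorAt_add]
  exact List.append_eq_append_iff_of_size_eq_left (by simp)

theorem occursAt_singleton {a : A} {m : ℕ} : OccursAt x [a] m ↔ x m = a := by
  simp [occursAt_iff_getElem, eq_comm]

theorem prefix_factorAt_iff {v : List A} {m n : ℕ} :
    v <+: factorAt x m n ↔ v.length ≤ n ∧ OccursAt x v m := by
  rw [List.prefix_iff_eq_take, factorAt, ← List.map_take, List.take_range, occursAt_iff_eq_factorAt]
  constructor
  · intro h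
    have hlen := congrArg List.length h
    simp only [List.length_map, List.length_range] at hlen
    refine ⟨by omega, ?_⟩
    rwa [Nat.min_eq_left (by omega)] at h
  · rintro ⟨hn, h⟩
    rwa [Nat.min_eq_left hn]

theorem mem_occSet_factorAt {v : List A} {m n o : ℕ} (hv : v ≠ []) :
    o ∈ occSet v (factorAt x m n) ↔ o + v.length ≤ n ∧ OccursAt x v (m + o) := by
  have := List.length_pos_iff.2 hv
  simp only [occSet, Set.mem_ofPred_eq, drop_factorAt, prefix_factorAt_iff]
  constructor <;> rintro ⟨hlen, hocc⟩ <;> exact ⟨by omega, hocc⟩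

theorem IsFactorOf.of_infix {v w : List A} (h : v <:+: w) (hw : IsFactorOf x w) :
    IsFactorOf x v := by
  obtain ⟨s, t, rfl⟩ := h
  obtain ⟨m, hm⟩ := hw
  exact ⟨_, (occursAt_append.1 (occursAt_append.1 hm).1).2⟩

theorem OccursAt.transfer {u v : List A} {m m' j : ℕ} (hv : OccursAt x v m) (hv' : OccursAt x v m')
    (hu : OccursAt x u (m + j)) (hj : j + u.length ≤ v.length) : OccursAt x u (m' + j) := by
  rw [occursAt_iff_getElem] at hu ⊢
  intro i hi
  rw [hu i hi, add_assoc, add_assoc, hv.apply_add_eq hv' (by omega)]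

theorem OccursAt.append_of_not_rightSpecial {u s : List A} {m : ℕ}
    (hf : IsFactorOf x (u ++ s)) (hs : ∀ s', s' <+: s → s' ≠ s → ¬ RightSpecial x (u ++ s'))
    (hm : OccursAt x u m) : OccursAt x (u ++ s) m := by
  induction s generalizing u with
  | nil => simpa using hm
  | cons a s ih =>
    have hua : OccursAt x (u ++ [a]) m := by
      refine occursAt_append.2 ⟨hm, occursAt_singleton.2 (not_not.1 fun hne => ?_)⟩
      refine hs [] List.nil_prefix (List.cons_ne_nil a s).symm ⟨_, a, hne, ?_, ?_⟩
      · exact ⟨m, by simpa using occursAt_append.2 ⟨hm, occursAt_singleton.2 rfl⟩⟩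
      · exact hf.of_infix (List.IsPrefix.isInfix ⟨s, by simp⟩)
    have hext := ih (u := u ++ [a]) (by simpa using hf) (fun s' hpre hne => by
      simpa using hs (a :: s') (List.cons_prefix_cons.2 ⟨rfl, hpre⟩) (by simpa using hne)) hua
    simpa using hext

theorem OccursAt.append_of_not_leftSpecial {r u : List A} {m : ℕ}
    (hf : IsFactorOf x (r ++ u)) (hr : ∀ r', r' <:+ r → r' ≠ r → ¬ LeftSpecial x (r' ++ u))
    (hm : OccursAt x u (m + r.length)) : OccursAt x (r ++ u) m := by
  induction r using List.reverseRecOn generalizing u with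
  | nil => simpa using hm
  | append_singleton r a ih =>
    have hau : OccursAt x (a :: u) (m + r.length) := by
      rw [← List.singleton_append, occursAt_append]
      refine ⟨occursAt_singleton.2 (not_not.1 fun hne => ?_), by simpa [add_assoc] using hm⟩
      refine hr [] List.nil_suffix (by simp) ⟨_, a, hne, ?_, ?_⟩
      · exact ⟨m + r.length, by
          simpa using occursAt_append.2 ⟨occursAt_singleton.2 rfl, by simpa [add_assoc] using hm⟩⟩
      · exact hf.of_infix (List.IsSuffix.isInfix ⟨r, by simp⟩)
    have hext := ih (u := a :: u) (by simpa using hf) (fun r' hsuf hne => by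
      simpa using hr (r' ++ [a]) (by obtain ⟨t, rfl⟩ := hsuf; exact ⟨t, by simp⟩)
        (by simpa using hne)) hau
    simpa using hext

theorem OccursAt.extend_of_not_special {r u s : List A} {a : ℕ}
    (hf : IsFactorOf x (r ++ u ++ s)) (hr : r ≠ []) (hs : s ≠ [])
    (hns : ∀ r' s', r' <:+ r → r' ≠ r → s' <+: s → s' ≠ s →
      ¬ RightSpecial x (r' ++ u ++ s') ∧ ¬ LeftSpecial x (r' ++ u ++ s'))
    (ha : OccursAt x u (a + r.length)) : OccursAt x (r ++ u ++ s) a := by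
  have hru : OccursAt x (r ++ u) a := ha.append_of_not_leftSpecial
    (hf.of_infix (List.IsPrefix.isInfix ⟨s, rfl⟩))
    fun r' hsuf hne => by simpa using (hns r' [] hsuf hne List.nil_prefix hs.symm).2
  have hus : OccursAt x (u ++ s) (a + r.length) := ha.append_of_not_rightSpecial
    (hf.of_infix (List.IsSuffix.isInfix ⟨r, by simp⟩))
    fun s' hpre hne => by simpa using (hns [] s' List.nil_suffix hr.symm hpre hne).1
  rw [List.append_assoc, occursAt_append]
  exact ⟨(occursAt_append.1 hru).1, hus⟩

theorem ultPeriodic_of_periodic {N γ : ℕ} (hγ : 0 < γ) (h : ∀ t, N ≤ t → x (t + γ) = x t) :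
    UltPeriodic x := by
  have hiter : ∀ j t, N ≤ t → x (t + j * γ) = x t := by
    intro j
    induction j with
    | zero => simp
    | succ j ih =>
      intro t ht
      rw [Nat.succ_mul, ← add_assoc, h _ (by omega), ih t ht]
  have hperiod : ∀ j, OccursAt x (factorAt x N γ) (N + j * γ) := fun j =>
    occursAt_iff_getElem.2 fun i hi => by
      rw [getElem_factorAt, add_right_comm, hiter j _ (Nat.le_add_right N i)]
  refine ⟨factorAt x 0 N, factorAt x N γ, List.ne_nil_of_length_pos (by simpa), fun n => ?_⟩
  refine occursAt_append.2 ⟨occursAt_factorAt 0 N, ?_⟩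
  rw [length_factorAt, zero_add]
  induction n with
  | zero => simp [occursAt_iff_getElem]
  | succ n ih =>
    rw [List.replicate_succ', List.flatten_append, occursAt_append]
    simpa [List.length_flatten] using ⟨ih, hperiod n⟩

theorem periodic_of_occursAt {W : List A} {a γ N : ℕ} (ha : OccursAt x W a)
    (haγ : OccursAt x W (a + γ))
    (hcover : ∀ t, N ≤ t → ∃ b ≤ t, t + γ < b + W.length ∧ OccursAt x W b) :
    ∀ t, N ≤ t → x (t + γ) = x t := by
  intro t ht
  obtain ⟨b, hbt, hγb, hb⟩ := hcover t ht
  calc x (t + γ) = x (b + (t - b + γ)) := by congr 1; omega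
    _ = x (a + (t - b + γ)) := hb.apply_add_eq ha (by omega)
    _ = x (a + γ + (t - b)) := by congr 1; omega
    _ = x (b + (t - b)) := haγ.apply_add_eq hb (by omega)
    _ = x t := by congr 1; omega

theorem IsRecurrentFactor.exists_next {u : List A} (hu : IsRecurrentFactor x u) (p : ℕ) :
    ∃ q, p < q ∧ OccursAt x u q ∧ ∀ m, OccursAt x u m → p < m → q ≤ m := by
  classical
  have h : ∃ q, p < q ∧ OccursAt x u q := by
    obtain ⟨q, hq, hocc⟩ := hu (p + 1)
    exact ⟨q, by omega, hocc⟩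
  exact ⟨Nat.find h, (Nat.find_spec h).1, (Nat.find_spec h).2,
    fun m hm hpm => Nat.find_min' h ⟨hpm, hm⟩⟩

theorem IsRecurrentFactor.exists_occursAt_between {u : List A} {k : ℕ}
    (hu : IsRecurrentFactor x u)
    (hback : ∀ a, OccursAt x u (a + k) → ∃ m, OccursAt x u m ∧ a < m ∧ m < a + k) (t : ℕ) :
    ∃ b, OccursAt x u b ∧ t < b ∧ b < t + k := by
  obtain ⟨b, htb, hb, hmin⟩ := hu.exists_next t
  refine ⟨b, hb, htb, ?_⟩
  by_contra! hge
  obtain ⟨a, rfl⟩ : ∃ a, b = a + k := ⟨b - k, by omega⟩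
  obtain ⟨m, hm, ham, hmb⟩ := hback a hb
  rcases Nat.lt_or_ge t m with htm | hmt
  · have := hmin m hm htm
    omega
  · omega

theorem ultPeriodic_of_occursAt_between {u W : List A} {k : ℕ}
    (hW : ∀ a, OccursAt x u (a + k) → OccursAt x W a) (hWlen : 2 * k ≤ W.length)
    (hdense : ∀ t, ∃ b, OccursAt x u b ∧ t < b ∧ b < t + k) : UltPeriodic x := by
  obtain ⟨b₁, hb₁, hkb₁, -⟩ := hdense k
  obtain ⟨b₂, hb₂, hb₁₂, hb₂₁⟩ := hdense b₁
  obtain ⟨a, rfl⟩ : ∃ a, b₁ = a + k := ⟨b₁ - k, by omega⟩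
  obtain ⟨γ, rfl⟩ : ∃ γ, b₂ = a + γ + k := ⟨b₂ - (a + k), by omega⟩
  refine ultPeriodic_of_periodic (N := k) (γ := γ) (by omega)
    (periodic_of_occursAt (hW a hb₁) (hW (a + γ) hb₂) fun t _ => ?_)
  obtain ⟨b, hb, htb, hbt⟩ := hdense t
  obtain ⟨c, rfl⟩ : ∃ c, b = c + k := ⟨b - k, by omega⟩
  exact ⟨c, by omega, by omega, hW c hb⟩

theorem isClosedWord_factorAt {a ℓ g : ℕ} (hℓ : 0 < ℓ) (hg : 0 < g)
    (hrec : OccursAt x (factorAt x a ℓ) (a + g))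
    (hgap : ∀ o, 0 < o → o < g → ¬ OccursAt x (factorAt x a ℓ) (a + o)) :
    IsClosedWord (factorAt x a (ℓ + g)) := by
  have hne : factorAt x a ℓ ≠ [] := List.ne_nil_of_length_pos (by simpa)
  refine Or.inr ⟨factorAt x a ℓ, ⟨by simpa, by simpa, ?_, ?_⟩, ?_⟩
  · exact prefix_factorAt_iff.2 ⟨by simp, occursAt_factorAt a ℓ⟩
  · have hborder : factorAt x (a + g) ℓ = factorAt x a ℓ := by
      simpa using (occursAt_iff_eq_factorAt.1 hrec).symm
    rw [add_comm, factorAt_add, hborder]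
    exact List.suffix_append _ _
  · have hocc : occSet (factorAt x a ℓ) (factorAt x a (ℓ + g)) = {0, g} := by
      ext o
      simp only [mem_occSet_factorAt hne, length_factorAt, Set.mem_insert_iff,
        Set.mem_singleton_iff]
      constructor
      · rintro ⟨ho, hocc⟩
        by_contra! h
        exact hgap o (by omega) (by omega) hocc
      · rintro (rfl | rfl)
        · exact ⟨by omega, occursAt_factorAt a ℓ⟩
        · exact ⟨by omega, hrec⟩
    rw [hocc, Set.ncard_pair hg.ne]

theorem le_clComp_of_injective [Finite A] {k n : ℕ} {F : Fin k → List A}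
    (hF : Function.Injective F) (hlen : ∀ i, (F i).length = n) (hfac : ∀ i, IsFactorOf x (F i))
    (hclosed : ∀ i, IsClosedWord (F i)) : k ≤ clComp x n := by
  have hfin : {w : List A | w.length = n ∧ IsFactorOf x w ∧ IsClosedWord w}.Finite :=
    (List.finite_length_eq A n).subset fun w hw => hw.1
  calc k = (Set.range F).ncard := by rw [Set.ncard_range_of_injective hF, Nat.card_fin]
    _ ≤ clComp x n :=
      Set.ncard_le_ncard (by rintro _ ⟨i, rfl⟩; exact ⟨hlen i, hfac i, hclosed i⟩) hfin

theorem le_clComp_of_isolated_occurrence [Finite A] {u W : List A} {a k g ℓ : ℕ}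
    (hu : OccursAt x u (a + k)) (hg : 0 < g)
    (hbefore : ∀ m, OccursAt x u m → a < m → a + k ≤ m)
    (hafter : ∀ m, OccursAt x u m → a + k < m → a + k + g ≤ m)
    (hW : OccursAt x W a) (hWg : OccursAt x W (a + g))
    (hℓ : u.length + k ≤ ℓ) (hℓW : k + ℓ ≤ W.length) : k ≤ clComp x (ℓ + g) := by
  have hu_in : ∀ i < k, ∀ n b, ℓ ≤ n → OccursAt x (factorAt x (a + 1 + i) n) b →
      OccursAt x u (b + (k - 1 - i)) := by
    intro i hi n b hn hb
    refine (occursAt_factorAt (a + 1 + i) n).transfer hb ?_ (by simp; omega)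
    rwa [show a + 1 + i + (k - 1 - i) = a + k by omega]
  set F : Fin k → List A := fun i => factorAt x (a + 1 + i) (ℓ + g)
  have hle : ∀ i j, F i = F j → (i : ℕ) ≤ j := by
    intro i j hij
    by_contra! hji
    have hocc : OccursAt x (F i) (a + 1 + j) := hij ▸ occursAt_factorAt _ _
    have := hbefore _ (hu_in i i.2 _ _ (by omega) hocc) (by omega)
    omega
  refine le_clComp_of_injective (F := F) (fun i j hij => Fin.ext (le_antisymm (hle i j hij)
    (hle j i hij.symm))) (fun i => length_factorAt _ _) (fun i => ⟨_, occursAt_factorAt _ _⟩)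
    fun i => isClosedWord_factorAt (by have := i.2; omega) hg ?_ fun o ho hog hocc => ?_
  · have hrec := hW.transfer hWg (j := 1 + i) (u := factorAt x (a + 1 + i) ℓ)
      (by simpa [add_assoc] using occursAt_factorAt _ _) (by simp; omega)
    rwa [show a + 1 + i + g = a + g + (1 + i) by omega]
  · have := hafter _ (hu_in i i.2 _ _ le_rfl hocc) (by omega)
    omega

end

theorem recurrent_factor_near_special_general
    {A : Type*} [Fintype A] (x : ℕ → A) (hx : ¬ UltPeriodic x)
    (k d : ℕ) (hk : 0 < k)
    (S : Set ℕ) (hS : SyndeticWithGaps S d)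
    (hcl : ∀ n ∈ S, clComp x n < k)
    (u r s : List A) (hu : IsRecurrentFactor x u)
    (hr : r.length = k) (hs : s.length = k + d)
    (hf : IsFactorOf x (r ++ u ++ s)) :
    ∃ r' s' : List A, r' <:+ r ∧ r' ≠ r ∧ s' <+: s ∧ s' ≠ s ∧
      (RightSpecial x (r' ++ u ++ s') ∨ LeftSpecial x (r' ++ u ++ s')) := by
  by_contra! hns
  have hW : ∀ a, OccursAt x u (a + k) → OccursAt x (r ++ u ++ s) a := fun a ha =>
    (hr ▸ ha).extend_of_not_special hf (List.ne_nil_of_length_pos (by omega))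
      (List.ne_nil_of_length_pos (by omega)) hns
  by_cases hiso : ∃ a, OccursAt x u (a + k) ∧ ∀ m, OccursAt x u m → a < m → a + k ≤ m
  · obtain ⟨a, ha, hbefore⟩ := hiso
    obtain ⟨q, hq, hnext, hafter⟩ := hu.exists_next (a + k)
    obtain ⟨g, rfl⟩ : ∃ g, q = a + k + g := ⟨q - (a + k), by omega⟩
    obtain ⟨n, hnS, hn, hnd⟩ := hS (u.length + k + g)
    have hcount := le_clComp_of_isolated_occurrence (ℓ := n - g) ha (by omega) hbefore hafter
      (hW a ha) (hW (a + g) (by rwa [add_right_comm])) (by omega) (by simp; omega)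
    have := hcl n hnS
    rw [Nat.sub_add_cancel (by omega)] at hcount
    omega
  · push Not at hiso
    exact hx (ultPeriodic_of_occursAt_between hW (by simp; omega)
      (hu.exists_occursAt_between hiso))

/-- If `x` is aperiodic with `cl_x` bounded by `k` on a syndetic set with gaps
smaller than `d`, `u` is a recurrent factor of `x`, and `r u s` is a factor of
`x` with `|r| = k` and `|s| = k + d`, then some `r' u s'` with `r'` a proper
(possibly empty) suffix of `r` and `s'` a proper (possibly empty) prefix of `s`
is right or left special in `x`. -/
theorem recurrent_factor_near_special
    {A : Type*} [Fintype A] (x : ℕ → A) (hx : ¬ UltPeriodic x)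
    (k d : ℕ) (hk : 0 < k) (hd : 0 < d)
    (S : Set ℕ) (hS : SyndeticWithGaps S d)
    (hcl : ∀ n ∈ S, clComp x n < k)
    (u r s : List A) (hu : IsRecurrentFactor x u)
    (hr : r.length = k) (hs : s.length = k + d)
    (hf : IsFactorOf x (r ++ u ++ s)) :
    ∃ r' s' : List A, r' <:+ r ∧ r' ≠ r ∧ s' <+: s ∧ s' ≠ s ∧
      (RightSpecial x (r' ++ u ++ s') ∨ LeftSpecial x (r' ++ u ++ s')) :=
  recurrent_factor_near_special_general x hx k d hk S hS hcl u r s hu hr hs hf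
end

section
/- Let x be a recurrent infinite word over an alphabet A, and let v be a factor of x that admits exactly one return word u in x. Then x is ultimately periodic; more precisely, x = u′ u u u ⋯ for some finite (possibly empty) word u′, where u is the unique return word to v in x. -/
/-- `x` is recurrent: every factor occurs at infinitely many positions. -/
def Recurrent {A : Type*} (x : ℕ → A) : Prop :=
  ∀ w : List A, IsFactorOf x w → IsRecurrentFactor x w

/-- `u` is a return word (first return) to `v` in `x`: there are two
consecutive occurrences `i < j` of `v` in `x` with `u = x_i x_{i+1} ⋯ x_{j-1}`. -/
def IsReturnWord {A : Type*} (x : ℕ → A) (v u : List A) : Prop :=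
  ∃ i j : ℕ, i < j ∧ OccursAt x v i ∧ OccursAt x v j ∧
    (∀ l : ℕ, i < l → l < j → ¬ OccursAt x v l) ∧
    u = (List.range (j - i)).map fun t => x (i + t)

/-- If `x` is recurrent and a factor `v` of `x` admits exactly one return word
`u` in `x`, then `x = u' u u u ⋯` for some finite (possibly empty) word `u'`. -/
theorem ultimatelyPeriodic_of_unique_return_word
    {A : Type*} (x : ℕ → A) (hrec : Recurrent x)
    (v : List A) (hv : IsFactorOf x v)
    (u : List A) (hu : IsReturnWord x v u)
    (huniq : ∀ u' : List A, IsReturnWord x v u' → u' = u) :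
    ∃ u' : List A,
      ∀ n : ℕ, OccursAt x (u' ++ (List.replicate n u).flatten) 0 := by
  classical
  obtain ⟨i0, hi0⟩ := hv
  have step : ∀ i, OccursAt x v i →
      OccursAt x v (i + u.length) ∧
        u = (List.range u.length).map (fun t => x (i + t)) := by
    intro i hi
    have hex : ∃ l, i < l ∧ OccursAt x v l := by
      obtain ⟨m, hm, hocc⟩ := hrec v ⟨i, hi⟩ (i + 1)
      exact ⟨m, by omega, hocc⟩
    obtain ⟨hij, hoccj⟩ := Nat.find_spec hex
    set j := Nat.find hex with hj
    have hmin : ∀ l, i < l → l < j → ¬ OccursAt x v l := by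
      intro l h1 h2 hocc
      exact Nat.find_min hex h2 ⟨h1, hocc⟩
    have hret : IsReturnWord x v ((List.range (j - i)).map fun t => x (i + t)) :=
      ⟨i, j, hij, hi, hoccj, hmin, rfl⟩
    have hu' := huniq _ hret
    have hlen : j - i = u.length := by
      have := congrArg List.length hu'
      simpa using this
    have hj2 : j = i + u.length := by omega
    refine ⟨hj2 ▸ hoccj, ?_⟩
    have h2 := hu'.symm
    rw [hlen] at h2
    exact h2
  have key : ∀ k, OccursAt x v (i0 + k * u.length) := by
    intro k
    induction k with
    | zero => simpa using hi0
    | succ k ih =>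
      have h := (step _ ih).1
      have harith : i0 + k * u.length + u.length = i0 + (k + 1) * u.length := by ring
      rwa [harith] at h
  have eq_at : ∀ k, u = (List.range u.length).map (fun t => x (i0 + k * u.length + t)) :=
    fun k => (step _ (key k)).2
  refine ⟨(List.range i0).map x, ?_⟩
  intro n
  have hmain : (List.range i0).map x ++ (List.replicate n u).flatten
      = (List.range (i0 + n * u.length)).map x := by
    induction n with
    | zero => simp
    | succ n ih =>
      have harith : i0 + (n + 1) * u.length = (i0 + n * u.length) + u.length := by ring
      rw [harith, List.range_add, List.map_append, ← ih, List.replicate_succ',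
        List.flatten_append, List.map_map]
      have h2 : (List.range u.length).map ((fun i => x i) ∘ (i0 + n * u.length + ·)) = u :=
        (eq_at n).symm
      rw [h2]
      simp
  show _ = (List.range _).map fun i => x (0 + i)
  have hlen2 : ((List.range i0).map x ++ (List.replicate n u).flatten).length
      = i0 + n * u.length := by
    have := congrArg List.length hmain
    simpa using this
  rw [hlen2, hmain]
  simp
end
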